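/- Let F be a field of characteristic p > n (p prime), N ≥ 1, and let k, n be natural numbers with 1 ≤ k < n. Then the linear map ∂_0^{n−k} : S^n → S^k is surjective, and its kernel equals S^n ∩ 𝔪^{k+1}, where 𝔪 = (X_1, …, X_N); consequently ∂_0^{n−k} induces an F-linear isomorphism S^n / (S^n ∩ 𝔪^{k+1}) ≅ S^k. -/

import Mathlib

open MvPolynomial

/-- The ideal `𝔪 = (X 1, …, X N)` generated by the variables `X i` with `i ≠ 0`. -/
noncomputable def mIdeal (F : Type*) [CommSemiring F] (N : ℕ) :
    Ideal (MvPolynomial (Fin (N + 1)) F) :=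
  Ideal.span {p | ∃ i : Fin (N + 1), i ≠ 0 ∧ p = X i}

/-- The `m`-fold iterate of the partial derivative with respect to `X 0`,
as an `F`-linear endomorphism. -/
noncomputable def pd0pow (F : Type*) [CommSemiring F] (N : ℕ) (m : ℕ) :
    MvPolynomial (Fin (N + 1)) F →ₗ[F] MvPolynomial (Fin (N + 1)) F :=
  (pderiv (0 : Fin (N + 1))).toLinearMap ^ m

/-!
On a monomial, `∂₀^m X^d = d₀(d₀ - 1)⋯(d₀ - m + 1) X^(d - m e₀)`, and the falling factorial is
nonzero in characteristic `p` as soon as `m ≤ d₀ < p`. Hence on `S^n` the kernel of `∂₀^(n-k)` is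
spanned by the monomials with `d₀ < n - k`, i.e. with degree at least `k + 1` in `X₁, …, X_N`, and
these span `S^n ∩ 𝔪^(k+1)` because `𝔪^t` is the monomial ideal of the monomials of degree at
least `t` in `X₁, …, X_N`. Dividing by the falling factorial gives a preimage of every monomial of
`S^k`, and the isomorphism is the first isomorphism theorem.
-/
theorem CharP.cast_descFactorial_ne_zero {R : Type*} [Semiring R] [NoZeroDivisors R] [Nontrivial R]
    (p : ℕ) [CharP R p] {a m : ℕ} (hma : m ≤ a) (hap : a < p) : (a.descFactorial m : R) ≠ 0 := by
  induction m with
  | zero => simp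
  | succ m ih =>
    rw [Nat.descFactorial_succ, Nat.cast_mul]
    refine mul_ne_zero ?_ (ih (by omega))
    rw [Ne, CharP.cast_eq_zero_iff R p]
    exact fun h => absurd (Nat.le_of_dvd (by omega) h) (by omega)

theorem Finsupp.degree_eq_add_degree_erase {σ M : Type*} [AddCommMonoid M] (i : σ)
    (d : σ →₀ M) : d.degree = d i + (d.erase i).degree := by
  conv_lhs => rw [← single_add_erase i d]
  rw [map_add, degree_single]

namespace MvPolynomial

variable {R σ : Type*} [CommSemiring R] (i : σ)

theorem coeff_iterate_pderiv (m : ℕ) (f : MvPolynomial σ R) (e : σ →₀ ℕ) :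
    coeff e ((pderiv i)^[m] f) =
      coeff (e + Finsupp.single i m) f * (e i + m).descFactorial m := by
  induction m generalizing f with
  | zero => simp
  | succ m ih =>
    rw [Function.iterate_succ_apply, ih, coeff_pderiv, add_assoc, ← Finsupp.single_add,
      Finsupp.add_apply, Finsupp.single_eq_same, ← add_assoc, Nat.succ_descFactorial_succ]
    push_cast
    ring

theorem iterate_pderiv_monomial_add_single (m : ℕ) (d : σ →₀ ℕ) (r : R) :
    (pderiv i)^[m] (monomial (d + Finsupp.single i m) r) =
      monomial d (r * (d i + m).descFactorial m) := by
  classical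
  ext e
  simp only [coeff_iterate_pderiv, coeff_monomial, add_left_inj]
  split_ifs with h
  · rw [h]
  · rw [zero_mul]

theorem IsHomogeneous.iterate_pderiv {f : MvPolynomial σ R} {n : ℕ} (hf : f.IsHomogeneous n)
    (m : ℕ) : ((pderiv i)^[m] f).IsHomogeneous (n - m) := by
  intro e he
  rw [coeff_iterate_pderiv] at he
  have hdeg := not_imp_comm.mp (hf.coeff_eq_zero (d := e + Finsupp.single i m))
    (left_ne_zero_of_mul he)
  rw [map_add, Finsupp.degree_single] at hdeg
  rw [Pi.one_def, ← Finsupp.degree_eq_weight_one]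
  omega

theorem iterate_pderiv_eq_zero_iff [NoZeroDivisors R] [Nontrivial R] (p : ℕ) [CharP R p]
    {f : MvPolynomial σ R} (hfp : f.totalDegree < p) (m : ℕ) :
    (pderiv i)^[m] f = 0 ↔ ∀ d ∈ f.support, d i < m := by
  constructor
  · intro h d hd
    by_contra! hmd
    obtain ⟨e, rfl⟩ : ∃ e, d = e + Finsupp.single i m :=
      ⟨d - Finsupp.single i m, (tsub_add_cancel_of_le (Finsupp.single_le_iff.mpr hmd)).symm⟩
    have hcoeff := coeff_iterate_pderiv i m f e
    rw [h, coeff_zero] at hcoeff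
    have hep : e i + m < p :=
      calc e i + m = (e + Finsupp.single i m) i := by simp
        _ ≤ (e + Finsupp.single i m).degree := Finsupp.le_degree i _
        _ ≤ f.totalDegree := le_totalDegree hd
        _ < p := hfp
    exact mul_ne_zero (mem_support_iff.mp hd)
      (CharP.cast_descFactorial_ne_zero p (Nat.le_add_left m _) hep) hcoeff.symm
  · intro h
    ext e
    rw [coeff_iterate_pderiv, coeff_zero, notMem_support_iff.mp fun hd => ?_, zero_mul]
    simpa using h _ hd

theorem IsHomogeneous.exists_iterate_pderiv_eq {F : Type*} [Field F] (p : ℕ) [CharP F p]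
    {g : MvPolynomial σ F} {k : ℕ} (hg : g.IsHomogeneous k) {m : ℕ} (hkmp : k + m < p) :
    ∃ f : MvPolynomial σ F, f.IsHomogeneous (k + m) ∧ (pderiv i)^[m] f = g := by
  induction hg using IsWeightedHomogeneous.induction_on with
  | zero => exact ⟨0, isHomogeneous_zero _ _ _, iterate_map_zero _ _⟩
  | add g g' _ _ ih ih' =>
    obtain ⟨f, hf, rfl⟩ := ih
    obtain ⟨f', hf', rfl⟩ := ih'
    exact ⟨f + f', hf.add hf', iterate_map_add _ _ _ _⟩
  | monomial d r hd =>
    have hdk : d.degree = k := by rwa [Finsupp.degree_eq_weight_one, ← Pi.one_def]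
    have hc : ((d i + m).descFactorial m : F) ≠ 0 :=
      CharP.cast_descFactorial_ne_zero p (Nat.le_add_left m _)
        (lt_of_le_of_lt (by grw [Finsupp.le_degree i d, hdk]) hkmp)
    refine ⟨monomial (d + Finsupp.single i m) (r / (d i + m).descFactorial m),
      isHomogeneous_monomial _ ?_, ?_⟩
    · rw [map_add, Finsupp.degree_single, hdk]
    · rw [iterate_pderiv_monomial_add_single, div_mul_cancel₀ _ hc]

theorem monomial_mem_span_X_compl_pow {t : ℕ} {d : σ →₀ ℕ} (r : R)
    (hd : t ≤ (d.erase i).degree) : monomial d r ∈ Ideal.span (X '' {i}ᶜ) ^ t := by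
  obtain ⟨a, ha, rfl⟩ := Finsupp.exists_le_degree_eq _ t hd
  have hle : d.erase i ≤ d := by
    conv_rhs => rw [← Finsupp.single_add_erase i d]
    exact le_add_self
  obtain ⟨b, rfl⟩ := le_iff_exists_add.mp (ha.trans hle)
  rw [← one_mul r, ← monomial_mul, ← prod_X_pow_eq_monomial, Finsupp.degree_apply,
    ← Finset.prod_pow_eq_pow_sum]
  refine Ideal.mul_mem_right _ _ (Ideal.prod_mem_prod fun j hj => Ideal.pow_mem_pow ?_ _)
  refine Ideal.subset_span ⟨j, fun hji => Finsupp.mem_support_iff.mp hj ?_, rfl⟩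
  have hai := ha i
  rwa [Finsupp.erase_same, nonpos_iff_eq_zero, ← hji] at hai

theorem le_degree_erase_of_mem_span_X_compl_pow {t : ℕ} {f : MvPolynomial σ R}
    (hf : f ∈ Ideal.span (X '' {i}ᶜ) ^ t) : ∀ d ∈ f.support, t ≤ (d.erase i).degree := by
  classical
  induction t generalizing f with
  | zero => simp
  | succ t ih =>
    rw [pow_succ] at hf
    refine Submodule.mul_induction_on hf (fun g hg h hh d hd => ?_) (fun g h hg hh d hd => ?_)
    · obtain ⟨a, ha, b, hb, rfl⟩ := Finset.mem_add.mp (support_mul g h hd)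
      obtain ⟨j, hj, hbj⟩ := mem_ideal_span_X_image.mp hh b hb
      have hb1 : 1 ≤ (b.erase i).degree :=
        calc 1 ≤ b j := Nat.one_le_iff_ne_zero.mpr hbj
          _ = b.erase i j := (Finsupp.erase_ne hj).symm
          _ ≤ (b.erase i).degree := Finsupp.le_degree j _
      rw [Finsupp.erase_add, map_add]
      have := ih hg a ha
      omega
    · rcases Finset.mem_union.mp (support_add hd) with hd | hd
      exacts [hg d hd, hh d hd]

theorem mem_span_X_compl_pow_iff {t : ℕ} {f : MvPolynomial σ R} :
    f ∈ Ideal.span (X '' {i}ᶜ) ^ t ↔ ∀ d ∈ f.support, t ≤ (d.erase i).degree :=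
  ⟨le_degree_erase_of_mem_span_X_compl_pow i, fun h => f.as_sum ▸
    Ideal.sum_mem _ fun d hd => monomial_mem_span_X_compl_pow i _ (h d hd)⟩

theorem IsHomogeneous.iterate_pderiv_eq_zero_iff_mem_pow [NoZeroDivisors R] [Nontrivial R]
    (p : ℕ) [CharP R p] {f : MvPolynomial σ R} {n : ℕ} (hf : f.IsHomogeneous n) (hnp : n < p)
    (k : ℕ) : (pderiv i)^[n - k] f = 0 ↔ f ∈ Ideal.span (X '' {i}ᶜ) ^ (k + 1) := by
  rw [iterate_pderiv_eq_zero_iff i p (hf.totalDegree_le.trans_lt hnp), mem_span_X_compl_pow_iff]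
  refine forall₂_congr fun d hd => ?_
  have hdn : d.degree = n := (hf.degree_eq_sum_deg_support hd).symm
  have := Finsupp.degree_eq_add_degree_erase i d
  omega

end MvPolynomial

theorem LinearMap.exists_comap_quotEquiv_of_surjOn {R M M' : Type*} [Ring R] [AddCommGroup M]
    [Module R M] [AddCommGroup M'] [Module R M'] (L : M →ₗ[R] M') {P K : Submodule R M}
    {Q : Submodule R M'} (hmaps : ∀ x ∈ P, L x ∈ Q) (hsurj : ∀ y ∈ Q, ∃ x ∈ P, L x = y)
    (hker : ∀ x ∈ P, L x = 0 ↔ x ∈ K) :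
    ∃ e : (P ⧸ K.comap P.subtype) ≃ₗ[R] Q, ∀ x : P, (e (Submodule.Quotient.mk x) : M') = L x := by
  let L' := L.restrict hmaps
  have hL' : Function.Surjective L' := fun ⟨y, hy⟩ =>
    let ⟨x, hx, hxy⟩ := hsurj y hy
    ⟨⟨x, hx⟩, Subtype.ext hxy⟩
  have hK : K.comap P.subtype = LinearMap.ker L' := by
    ext x
    rw [Submodule.mem_comap, LinearMap.mem_ker, Submodule.subtype_apply, ← hker x x.2,
      ← Submodule.coe_eq_zero]
    rfl
  exact ⟨(Submodule.quotEquivOfEq _ _ hK).trans (L'.quotKerEquivOfSurjective hL'), fun x => rfl⟩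

theorem pd0pow_apply {F : Type*} [CommSemiring F] (N m : ℕ) (f : MvPolynomial (Fin (N + 1)) F) :
    pd0pow F N m f = (pderiv 0)^[m] f :=
  Module.End.pow_apply _ _ _

theorem mIdeal_eq_span_X_compl (F : Type*) [CommSemiring F] (N : ℕ) :
    mIdeal F N = Ideal.span (X '' {0}ᶜ) := by
  rw [mIdeal]
  congr 1
  ext q
  simp [eq_comm]

theorem stmt_11_general {F : Type*} [Field F] (p : ℕ) [CharP F p]
    {N : ℕ} (k n : ℕ) (hkn : k < n) (hnp : n < p) :
    (∀ g ∈ homogeneousSubmodule (Fin (N + 1)) F k,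
        ∃ f ∈ homogeneousSubmodule (Fin (N + 1)) F n, pd0pow F N (n - k) f = g) ∧
    (∀ f ∈ homogeneousSubmodule (Fin (N + 1)) F n,
        pd0pow F N (n - k) f = 0 ↔ f ∈ (mIdeal F N) ^ (k + 1)) ∧
    ∃ e : (↥(homogeneousSubmodule (Fin (N + 1)) F n) ⧸
            (Submodule.restrictScalars F ((mIdeal F N) ^ (k + 1))).comap
              (homogeneousSubmodule (Fin (N + 1)) F n).subtype) ≃ₗ[F]
          ↥(homogeneousSubmodule (Fin (N + 1)) F k),
      ∀ f : ↥(homogeneousSubmodule (Fin (N + 1)) F n),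
        (e (Submodule.Quotient.mk f) : MvPolynomial (Fin (N + 1)) F) =
          pd0pow F N (n - k) (f : MvPolynomial (Fin (N + 1)) F) := by
  have hn : k + (n - k) = n := by omega
  have hmaps : ∀ f ∈ homogeneousSubmodule (Fin (N + 1)) F n,
      pd0pow F N (n - k) f ∈ homogeneousSubmodule (Fin (N + 1)) F k := fun f hf => by
    have hhom := IsHomogeneous.iterate_pderiv 0 hf (n - k)
    rwa [Nat.sub_sub_self hkn.le, ← pd0pow_apply] at hhom
  have hsurj : ∀ g ∈ homogeneousSubmodule (Fin (N + 1)) F k,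
      ∃ f ∈ homogeneousSubmodule (Fin (N + 1)) F n, pd0pow F N (n - k) f = g := fun g hg => by
    obtain ⟨f, hf, hfg⟩ := IsHomogeneous.exists_iterate_pderiv_eq 0 p hg (hn.symm ▸ hnp)
    exact ⟨f, hn ▸ hf, (pd0pow_apply ..).trans hfg⟩
  have hker : ∀ f ∈ homogeneousSubmodule (Fin (N + 1)) F n,
      pd0pow F N (n - k) f = 0 ↔ f ∈ (mIdeal F N) ^ (k + 1) := fun f hf => by
    rw [pd0pow_apply, mIdeal_eq_span_X_compl]
    exact IsHomogeneous.iterate_pderiv_eq_zero_iff_mem_pow 0 p hf hnp k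
  exact ⟨hsurj, hker, (pd0pow F N (n - k)).exists_comap_quotEquiv_of_surjOn hmaps hsurj hker⟩

theorem stmt_11 {F : Type*} [Field F] (p : ℕ) [Fact p.Prime] [CharP F p]
    {N : ℕ} (hN : 1 ≤ N) (k n : ℕ) (hk : 1 ≤ k) (hkn : k < n) (hnp : n < p) :
    (∀ g ∈ homogeneousSubmodule (Fin (N + 1)) F k,
        ∃ f ∈ homogeneousSubmodule (Fin (N + 1)) F n, pd0pow F N (n - k) f = g) ∧
    (∀ f ∈ homogeneousSubmodule (Fin (N + 1)) F n,
        pd0pow F N (n - k) f = 0 ↔ f ∈ (mIdeal F N) ^ (k + 1)) ∧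
    ∃ e : (↥(homogeneousSubmodule (Fin (N + 1)) F n) ⧸
            (Submodule.restrictScalars F ((mIdeal F N) ^ (k + 1))).comap
              (homogeneousSubmodule (Fin (N + 1)) F n).subtype) ≃ₗ[F]
          ↥(homogeneousSubmodule (Fin (N + 1)) F k),
      ∀ f : ↥(homogeneousSubmodule (Fin (N + 1)) F n),
        (e (Submodule.Quotient.mk f) : MvPolynomial (Fin (N + 1)) F) =
          pd0pow F N (n - k) (f : MvPolynomial (Fin (N + 1)) F) :=
  stmt_11_general p k n hkn hnp
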